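/- There exist no three-player impartial games X and Y such that X is an N-game, Y is a P-game, and X + Y is a P-game. -/
import Mathlib


/-- Three-player impartial games: well-founded game trees. -/
inductive G3 : Type 1 where
  | mk : (ι : Type) → (ι → G3) → G3

namespace G3

/-- The index type of options (moves) of a game. -/
def moves : G3 → Type
  | mk ι _ => ι

/-- The option of a game corresponding to a move. -/
def moveFn : (g : G3) → moves g → G3
  | mk _ f => f

/-- Disjunctive sum: move in exactly one component. -/
noncomputable def add : G3 → G3 → G3 :=
  G3.rec (fun ι f ihf =>
    G3.rec (fun κ g ihg =>
      mk (ι ⊕ κ) (fun x =>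
        match x with
        | Sum.inl i => ihf i (mk κ g)
        | Sum.inr j => ihg j)))

/-- The four outcome types of a three-player impartial game. -/
inductive PType : Type
  | N | O | P | Q
deriving DecidableEq

open Classical in
/-- The type of a game: `N` iff some option is a `P`-game; `O` iff it has at least
one option and all options are `N`-games; `P` iff all options are `O`-games;
`Q` otherwise. -/
noncomputable def typ : G3 → PType
  | mk ι f =>
    if ∃ i, typ (f i) = PType.P then PType.N
    else if Nonempty ι ∧ ∀ i, typ (f i) = PType.N then PType.O
    else if ∀ i, typ (f i) = PType.O then PType.P
    else PType.Q

/-- The Nim heap of size `n`: options are heaps of sizes `0, …, n-1`. -/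
def nim : ℕ → G3
  | n => mk (Fin n) (fun i => nim i)
termination_by n => n
decreasing_by exact i.isLt

/-- The sum of `n` Nim heaps of size 1. -/
noncomputable def ones : ℕ → G3
  | 0 => nim 0
  | n + 1 => add (ones n) (nim 1)

lemma add_mk (ι : Type) (f : ι → G3) (κ : Type) (g : κ → G3) :
    add (mk ι f) (mk κ g) = mk (ι ⊕ κ) (fun x =>
      match x with
      | Sum.inl i => add (f i) (mk κ g)
      | Sum.inr j => add (mk ι f) (g j)) := rfl

open Classical in
lemma typ_mk (ι : Type) (f : ι → G3) :
    typ (mk ι f) =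
      if ∃ i, typ (f i) = PType.P then PType.N
      else if Nonempty ι ∧ ∀ i, typ (f i) = PType.N then PType.O
      else if ∀ i, typ (f i) = PType.O then PType.P
      else PType.Q := by rw [typ]

lemma typ_eq_N_iff (x : G3) : typ x = PType.N ↔ ∃ i, typ (x.moveFn i) = PType.P := by
  cases x with
  | mk ι f =>
    rw [typ_mk]
    show _ ↔ ∃ i, typ (f i) = PType.P
    constructor
    · intro h
      split_ifs at h with h1 h2 h3
      all_goals first | exact h1 | exact h2 | exact h3 | exact PType.noConfusion h
    · intro h
      rw [if_pos h]

lemma typ_eq_O_iff (x : G3) :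
    typ x = PType.O ↔ Nonempty x.moves ∧ ∀ i, typ (x.moveFn i) = PType.N := by
  cases x with
  | mk ι f =>
    rw [typ_mk]
    show _ ↔ Nonempty ι ∧ ∀ i, typ (f i) = PType.N
    constructor
    · intro h
      split_ifs at h with h1 h2 h3
      all_goals first | exact h1 | exact h2 | exact h3 | exact PType.noConfusion h
    · intro h
      have h1 : ¬ ∃ i, typ (f i) = PType.P := by
        rintro ⟨i, hi⟩; rw [h.2 i] at hi; exact PType.noConfusion hi
      rw [if_neg h1, if_pos h]

lemma typ_eq_P_iff (x : G3) :
    typ x = PType.P ↔ ∀ i, typ (x.moveFn i) = PType.O := by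
  cases x with
  | mk ι f =>
    rw [typ_mk]
    show _ ↔ ∀ i, typ (f i) = PType.O
    constructor
    · intro h
      split_ifs at h with h1 h2 h3
      all_goals first | exact h1 | exact h2 | exact h3 | exact PType.noConfusion h
    · intro h
      have h1 : ¬ ∃ i, typ (f i) = PType.P := by
        rintro ⟨i, hi⟩; rw [h i] at hi; exact PType.noConfusion hi
      have h2 : ¬ (Nonempty ι ∧ ∀ i, typ (f i) = PType.N) := by
        rintro ⟨⟨i⟩, hN⟩
        have := hN i
        rw [h i] at this
        exact PType.noConfusion this
      rw [if_neg h1, if_neg h2, if_pos h]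

/-- Sub-lemmas combining add and typ. -/
lemma typ_add_eq_N_iff (x y : G3) :
    typ (add x y) = PType.N ↔
      (∃ i, typ (add (x.moveFn i) y) = PType.P) ∨
      (∃ j, typ (add x (y.moveFn j)) = PType.P) := by
  cases x with
  | mk ι f =>
    cases y with
    | mk κ g =>
      rw [add_mk, typ_eq_N_iff]
      constructor
      · rintro ⟨i, hi⟩
        cases i with
        | inl i => exact Or.inl ⟨i, hi⟩
        | inr j => exact Or.inr ⟨j, hi⟩
      · rintro (⟨i, hi⟩ | ⟨j, hj⟩)
        · exact ⟨Sum.inl i, hi⟩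
        · exact ⟨Sum.inr j, hj⟩

lemma typ_add_eq_O_iff (x y : G3) :
    typ (add x y) = PType.O ↔
      (Nonempty x.moves ∨ Nonempty y.moves) ∧
      (∀ i, typ (add (x.moveFn i) y) = PType.N) ∧
      (∀ j, typ (add x (y.moveFn j)) = PType.N) := by
  cases x with
  | mk ι f =>
    cases y with
    | mk κ g =>
      rw [add_mk, typ_eq_O_iff]
      constructor
      · rintro ⟨hne, h⟩
        refine ⟨?_, fun i => h (Sum.inl i), fun j => h (Sum.inr j)⟩
        obtain ⟨i | j⟩ := hne
        · exact Or.inl ⟨i⟩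
        · exact Or.inr ⟨j⟩
      · rintro ⟨hne, h1, h2⟩
        refine ⟨?_, ?_⟩
        · rcases hne with hi | hj
          · obtain ⟨i⟩ := hi; exact ⟨Sum.inl i⟩
          · obtain ⟨j⟩ := hj; exact ⟨Sum.inr j⟩
        · rintro (i | j)
          · exact h1 i
          · exact h2 j

lemma typ_add_eq_P_iff (x y : G3) :
    typ (add x y) = PType.P ↔
      (∀ i, typ (add (x.moveFn i) y) = PType.O) ∧
      (∀ j, typ (add x (y.moveFn j)) = PType.O) := by
  cases x with
  | mk ι f =>
    cases y with
    | mk κ g =>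
      rw [add_mk, typ_eq_P_iff]
      constructor
      · intro h
        exact ⟨fun i => h (Sum.inl i), fun j => h (Sum.inr j)⟩
      · rintro ⟨h1, h2⟩ (i | j)
        · exact h1 i
        · exact h2 j

/-- `x` is an option of `y`. -/
def IsOption (x y : G3) : Prop := ∃ i, y.moveFn i = x

theorem isOption_wf : WellFounded IsOption := by
  constructor
  intro x
  induction x with
  | mk ι f ih =>
    constructor
    rintro y ⟨i, rfl⟩
    exact ih i

/-- Transitive closure of the option relation. -/
def Subpos : G3 → G3 → Prop := Relation.TransGen IsOption

theorem sub_wf : WellFounded Subpos := isOption_wf.transGen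

lemma sub_moveFn (x : G3) (i : x.moves) : Subpos (x.moveFn i) x :=
  Relation.TransGen.single ⟨i, rfl⟩

lemma sub_moveFn2 (x : G3) (i : x.moves) (j : (x.moveFn i).moves) :
    Subpos ((x.moveFn i).moveFn j) x :=
  Relation.TransGen.head ⟨j, rfl⟩ (sub_moveFn x i)

open PType in
/-- The combined statement for the mutual induction. -/
def S (X Y : G3) : Prop :=
  (¬ (typ X = N ∧ typ Y = P ∧ typ (add X Y) = P)) ∧
  (¬ (typ X = P ∧ typ Y = N ∧ typ (add X Y) = P)) ∧
  (¬ (typ X = P ∧ typ Y = P ∧ typ (add X Y) = O)) ∧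
  (¬ (typ X = O ∧ typ Y = O ∧ typ (add X Y) = P)) ∧
  (¬ (typ X = N ∧ typ Y = O ∧ typ (add X Y) = O))

open PType in
theorem key : ∀ X Y : G3, S X Y := by
  intro X
  induction X using sub_wf.induction with
  | _ X ihX =>
    intro Y
    induction Y using sub_wf.induction with
    | _ Y ihY =>
      constructor
      -- G : ¬ (N, P, P)
      · rintro ⟨hX, hY, hS⟩
        obtain ⟨i, hi⟩ := (typ_eq_N_iff X).mp hX
        have hO : typ (add (X.moveFn i) Y) = O :=
          ((typ_add_eq_P_iff X Y).mp hS).1 i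
        exact (ihX _ (sub_moveFn X i) Y).2.2.1 ⟨hi, hY, hO⟩
      constructor
      -- G' : ¬ (P, N, P)
      · rintro ⟨hX, hY, hS⟩
        obtain ⟨j, hj⟩ := (typ_eq_N_iff Y).mp hY
        have hO : typ (add X (Y.moveFn j)) = O :=
          ((typ_add_eq_P_iff X Y).mp hS).2 j
        exact (ihY _ (sub_moveFn Y j)).2.2.1 ⟨hX, hj, hO⟩
      constructor
      -- A : ¬ (P, P, O)
      · rintro ⟨hX, hY, hS⟩
        obtain ⟨hne, hL, hR⟩ := (typ_add_eq_O_iff X Y).mp hS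
        have hXo := (typ_eq_P_iff X).mp hX
        have hYo := (typ_eq_P_iff Y).mp hY
        rcases hne with hi | hj
        · -- option X_i + Y is N
          obtain ⟨i⟩ := hi
          rcases (typ_add_eq_N_iff _ _).mp (hL i) with ⟨i', hi'⟩ | ⟨j, hj⟩
          · -- X_ii' is N (option of the O-game X_i), Y is P, sum P : contradicts G
            have hN : typ ((X.moveFn i).moveFn i') = N :=
              ((typ_eq_O_iff _).mp (hXo i)).2 i'
            exact (ihX _ (sub_moveFn2 X i i') Y).1 ⟨hN, hY, hi'⟩
          · -- X_i O, Y_j O, sum P : contradicts B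
            exact (ihX _ (sub_moveFn X i) (Y.moveFn j)).2.2.2.1
              ⟨hXo i, ((typ_eq_P_iff Y).mp hY) j, hj⟩
        · -- option X + Y_j is N
          obtain ⟨j⟩ := hj
          rcases (typ_add_eq_N_iff _ _).mp (hR j) with ⟨i, hi⟩ | ⟨j', hj'⟩
          · exact (ihX _ (sub_moveFn X i) (Y.moveFn j)).2.2.2.1
              ⟨hXo i, hYo j, hi⟩
          · have hN : typ ((Y.moveFn j).moveFn j') = N :=
              ((typ_eq_O_iff _).mp (hYo j)).2 j'
            exact (ihY _ (sub_moveFn2 Y j j')).2.1 ⟨hX, hN, hj'⟩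
      constructor
      -- B : ¬ (O, O, P)
      · rintro ⟨hX, hY, hS⟩
        obtain ⟨⟨i⟩, hXn⟩ := (typ_eq_O_iff X).mp hX
        have hO : typ (add (X.moveFn i) Y) = O :=
          ((typ_add_eq_P_iff X Y).mp hS).1 i
        exact (ihX _ (sub_moveFn X i) Y).2.2.2.2 ⟨hXn i, hY, hO⟩
      -- C : ¬ (N, O, O)
      · rintro ⟨hX, hY, hS⟩
        obtain ⟨i, hi⟩ := (typ_eq_N_iff X).mp hX
        have hN : typ (add (X.moveFn i) Y) = N :=
          ((typ_add_eq_O_iff X Y).mp hS).2.1 i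
        rcases (typ_add_eq_N_iff _ _).mp hN with ⟨i', hi'⟩ | ⟨j, hj⟩
        · -- X_ii' O, Y O, sum P : contradicts B
          have hOo : typ ((X.moveFn i).moveFn i') = O :=
            ((typ_eq_P_iff _).mp hi) i'
          exact (ihX _ (sub_moveFn2 X i i') Y).2.2.2.1 ⟨hOo, hY, hi'⟩
        · -- X_i P, Y_j N, sum P : contradicts G'
          have hYn : typ (Y.moveFn j) = N := ((typ_eq_O_iff Y).mp hY).2 j
          exact (ihX _ (sub_moveFn X i) (Y.moveFn j)).2.1 ⟨hi, hYn, hj⟩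

theorem no_N_plus_P_eq_P :
    ¬ ∃ X Y : G3, typ X = PType.N ∧ typ Y = PType.P ∧ typ (add X Y) = PType.P := by
  rintro ⟨X, Y, h⟩
  exact (key X Y).1 h

end G3
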